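/- arXiv:1012.0789 — 2 statements merged into one kernel-verified Lean document; each statement's English description precedes it below -/
import Mathlib

section
/- Let k be a field of characteristic zero and G a finite group. Every finite-dimensional k-linear representation V of G with V ≠ 0 contains the trivial representation as a direct summand of the tensor power V^{⊗|G|}. -/
open CategoryTheory MonoidalCategory

/-- `n`-th tensor power of an object in a monoidal category. -/
noncomputable def FDRep.tensorPow {k G : Type u} [Field k] [Group G] (V : FDRep k G) : ℕ → FDRep k G
  | 0 => 𝟙_ (FDRep k G)
  | n + 1 => FDRep.tensorPow V n ⊗ V

/-!
Pick `v ≠ 0` in `V` and put `n = |G|`. The vector `u = ∑ g, (g • v)^{⊗n}` of `V^{⊗n}` is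
`G`-invariant. To see that it is nonzero, choose for each `g` a functional `φ g` with
`φ g v ≠ 0` that kills `g • v` unless `v` is a multiple of `g • v`, and evaluate `u` against
`⊗ h, φ h`. The term of `g` vanishes unless `v = c • g • v`; then `c` is an eigenvalue of `g⁻¹`,
so `c ^ n = 1` and the term is `∏ h, φ h v`. Hence the value is a positive integer multiple of
`∏ h, φ h v ≠ 0`. Finally `u` gives a monomorphism `𝟙 ⟶ V^{⊗n}`, which splits because, by
Maschke's theorem, `𝟙` is an injective object of `FDRep k G`.
-/

theorem Module.exists_dual_ne_zero_and_eq_zero_of_notMem_span {k V : Type*} [Field k]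
    [AddCommGroup V] [Module k V] {v : V} (hv : v ≠ 0) (w : V) :
    ∃ f : Module.Dual k V, f v ≠ 0 ∧ (v ∉ k ∙ w → f w = 0) := by
  by_cases hvw : v ∈ k ∙ w
  · obtain ⟨f, hf⟩ := Module.Projective.exists_dual_ne_zero k hv
    exact ⟨f, hf, absurd hvw⟩
  · obtain ⟨f, hf, hmap⟩ := Submodule.exists_dual_map_eq_bot_of_notMem hvw inferInstance
    refine ⟨f, hf, fun _ => ?_⟩
    rwa [Submodule.map_span, Set.image_singleton, Submodule.span_singleton_eq_bot] at hmap

namespace Representation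

variable {k G V : Type*} [Field k] [Group G] [Fintype G] [AddCommGroup V] [Module k V]
  (ρ : Representation k G V)

theorem pow_card_eq_one_of_apply_eq_smul {g : G} {v : V} {c : k} (hv : v ≠ 0)
    (h : ρ g v = c • v) : c ^ Fintype.card G = 1 := by
  have hpow (m : ℕ) : ρ (g ^ m) v = c ^ m • v := by
    induction m with
    | zero => simp
    | succ m ih =>
      rw [pow_succ, map_mul, Module.End.mul_apply, h, map_smul, ih, smul_smul, pow_succ']
  refine smul_left_injective k hv ?_
  simpa [pow_card_eq_one] using (hpow (Fintype.card G)).symm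

theorem prod_dual_apply_eq_of_mem_span {g : G} {v : V} (hv : v ≠ 0) (hg : v ∈ k ∙ ρ g v)
    (φ : G → Module.Dual k V) : ∏ h, φ h (ρ g v) = ∏ h, φ h v := by
  obtain ⟨c, hc⟩ := Submodule.mem_span_singleton.mp hg
  have hc' : ρ g⁻¹ v = c • v := by
    conv_lhs => rw [← hc]
    rw [map_smul, ← Module.End.mul_apply, ← map_mul, inv_mul_cancel, map_one,
      Module.End.one_apply]
  calc ∏ h, φ h (ρ g v) = c ^ Fintype.card G * ∏ h, φ h (ρ g v) := by
        rw [ρ.pow_card_eq_one_of_apply_eq_smul hv hc', one_mul]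
    _ = ∏ h, φ h (c • ρ g v) := by
        simp only [map_smul, smul_eq_mul, Finset.prod_mul_distrib, Finset.prod_const,
          Finset.card_univ]
    _ = ∏ h, φ h v := by rw [hc]

theorem sum_prod_dual_apply_ne_zero [CharZero k] {v : V} (hv : v ≠ 0)
    (φ : G → Module.Dual k V) (hφv : ∀ g, φ g v ≠ 0)
    (hφ : ∀ g, v ∉ k ∙ ρ g v → φ g (ρ g v) = 0) :
    ∑ g, ∏ h, φ h (ρ g v) ≠ 0 := by
  classical
  set S := Finset.univ.filter fun g => v ∈ k ∙ ρ g v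
  have hsum : ∑ g, ∏ h, φ h (ρ g v) = S.card * ∏ h, φ h v := by
    rw [← Finset.sum_filter_add_sum_filter_not _ fun g => v ∈ k ∙ ρ g v,
      Finset.sum_congr rfl fun g hg =>
        ρ.prod_dual_apply_eq_of_mem_span hv (Finset.mem_filter.mp hg).2 φ,
      Finset.sum_eq_zero fun g hg =>
        Finset.prod_eq_zero (Finset.mem_univ g) (hφ g (Finset.mem_filter.mp hg).2),
      Finset.sum_const, nsmul_eq_mul, add_zero]
  have hS : (1 : G) ∈ S := by simp [S, Submodule.mem_span_singleton_self]
  rw [hsum]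
  exact mul_ne_zero (Nat.cast_ne_zero.mpr (Finset.card_ne_zero_of_mem hS))
    (Finset.prod_ne_zero_iff.mpr fun g _ => hφv g)

end Representation

namespace FDRep

variable {k G : Type u} [Field k] [Group G]

theorem nontrivial_of_not_isZero {V : FDRep k G} (hV : ¬Limits.IsZero V) : Nontrivial V := by
  contrapose! hV
  refine (Limits.IsZero.iff_id_eq_zero V).mpr ?_
  ext x
  exact Subsingleton.elim _ _

noncomputable def tmulPow (V : FDRep k G) (w : V) : (n : ℕ) → V.tensorPow n
  | 0 => (1 : k)
  | n + 1 => (V.tmulPow w n ⊗ₜ[k] w : TensorProduct k (V.tensorPow n) V)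

theorem ρ_tmulPow (V : FDRep k G) (g : G) (w : V) :
    ∀ n : ℕ, (V.tensorPow n).ρ g (V.tmulPow w n) = V.tmulPow (V.ρ g w) n
  | 0 => rfl
  | n + 1 => congrArg (· ⊗ₜ[k] V.ρ g w) (ρ_tmulPow V g w n)

theorem ρ_sum_tmulPow [Fintype G] (V : FDRep k G) (v : V) (n : ℕ) (g : G) :
    (V.tensorPow n).ρ g (∑ h, V.tmulPow (V.ρ h v) n) = ∑ h, V.tmulPow (V.ρ h v) n := by
  simp only [map_sum, ρ_tmulPow, ← Module.End.mul_apply, ← map_mul]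
  exact Equiv.sum_comp (Equiv.mulLeft g) fun h => V.tmulPow (V.ρ h v) n

noncomputable def dualTprod (V : FDRep k G) :
    {n : ℕ} → (Fin n → Module.Dual k V) → Module.Dual k (V.tensorPow n)
  | 0, _ => LinearMap.id
  | n + 1, fs => TensorProduct.lift
      ((LinearMap.mul k k).compl₁₂ (V.dualTprod (fs ∘ Fin.castSucc)) (fs (Fin.last n)))

theorem dualTprod_tmulPow (V : FDRep k G) (w : V) :
    ∀ {n : ℕ} (fs : Fin n → Module.Dual k V), V.dualTprod fs (V.tmulPow w n) = ∏ i, fs i w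
  | 0, _ => rfl
  | n + 1, fs => by
    rw [Fin.prod_univ_castSucc]
    exact (TensorProduct.lift.tmul _ _).trans
      (congrArg (· * fs (Fin.last n) w) (dualTprod_tmulPow V w (fs ∘ Fin.castSucc)))

theorem exists_invariant_ne_zero_tensorPow_card [CharZero k] [Fintype G] (V : FDRep k G)
    {v : V} (hv : v ≠ 0) :
    ∃ u : V.tensorPow (Fintype.card G), (∀ g, (V.tensorPow _).ρ g u = u) ∧ u ≠ 0 := by
  choose φ hφv hφ using
    fun g => Module.exists_dual_ne_zero_and_eq_zero_of_notMem_span (k := k) hv (V.ρ g v)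
  refine ⟨∑ h, V.tmulPow (V.ρ h v) _, V.ρ_sum_tmulPow v _, fun hu => ?_⟩
  apply Representation.sum_prod_dual_apply_ne_zero V.ρ hv φ hφv hφ
  let F := V.dualTprod (φ ∘ (Fintype.equivFin G).symm)
  have hF (w : V) : F (V.tmulPow w _) = ∏ h, φ h w :=
    (V.dualTprod_tmulPow w _).trans ((Fintype.equivFin G).symm.prod_comp fun h => φ h w)
  simpa [hF] using congrArg F hu

theorem exists_unit_retract_of_invariant [Finite G] [NeZero (Nat.card G : k)] (W : FDRep k G)
    {u : W} (hu : ∀ g, W.ρ g u = u) (hu0 : u ≠ 0) :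
    ∃ (s : 𝟙_ (FDRep k G) ⟶ W) (r : W ⟶ 𝟙_ (FDRep k G)), s ≫ r = 𝟙 _ := by
  let s : 𝟙_ (FDRep k G) ⟶ W :=
    { hom := ConcreteCategory.ofHom (LinearMap.toSpanSingleton k W u)
      comm := fun g => FGModuleCat.hom_ext <| LinearMap.ext fun (c : k) => by
        show c • u = W.ρ g (c • u)
        rw [map_smul, hu] }
  have : Mono s := ConcreteCategory.mono_of_injective s (smul_left_injective k hu0)
  exact ⟨s, Injective.factorThru (𝟙 _) s, Injective.comp_factorThru _ _⟩

end FDRep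

/-- over a field of characteristic zero, every nonzero
finite-dimensional representation `V` of a finite group `G` contains the trivial
representation as a direct summand of `V^{⊗|G|}`. -/
theorem trivial_rep_summand_of_tensor_pow_card
    {k G : Type u} [Field k] [CharZero k] [Group G] [Fintype G]
    (V : FDRep k G) (hV : ¬ CategoryTheory.Limits.IsZero V) :
    ∃ (s : 𝟙_ (FDRep k G) ⟶ FDRep.tensorPow V (Fintype.card G))
      (r : FDRep.tensorPow V (Fintype.card G) ⟶ 𝟙_ (FDRep k G)),
      s ≫ r = 𝟙 (𝟙_ (FDRep k G)) := by
  have := FDRep.nontrivial_of_not_isZero hV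
  obtain ⟨v, hv⟩ := exists_ne (0 : V)
  obtain ⟨u, hu, hu0⟩ := V.exists_invariant_ne_zero_tensorPow_card hv
  exact FDRep.exists_unit_retract_of_invariant _ hu hu0
end

section
/- Let R be a supercommutative ring, M a Z/2-graded left R-module, and 𝔭 a homogeneous prime ideal of R. Then the localization M_𝔭 is zero if and only if the localizations of both homogeneous components M⁰ and M¹, regarded as modules over the commutative ring R⁰, vanish at the induced prime 𝔭 ∩ R⁰. -/
/-- A homogeneous prime ideal of a `ℤ/2`-graded ring. -/
structure SuperHomogeneousPrime (R : Type*) [Ring R]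
    (𝒜 : ZMod 2 → AddSubgroup R) [GradedRing 𝒜] where
  carrier : Set R
  zero_mem' : (0 : R) ∈ carrier
  add_mem' : ∀ a b : R, a ∈ carrier → b ∈ carrier → a + b ∈ carrier
  mul_mem_left' : ∀ r x : R, x ∈ carrier → r * x ∈ carrier
  mul_mem_right' : ∀ x r : R, x ∈ carrier → x * r ∈ carrier
  homogeneous' : ∀ x ∈ carrier, ∀ i : ZMod 2,
    (DirectSum.decompose 𝒜 x i : R) ∈ carrier
  ne_top' : carrier ≠ Set.univ
  prime' : ∀ a b : R, (∃ i, a ∈ 𝒜 i) → (∃ j, b ∈ 𝒜 j) →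
    a * b ∈ carrier → a ∈ carrier ∨ b ∈ carrier

/-- for a graded module `M = M⁰ ⊕ M¹` over a supercommutative
ring `R` and a homogeneous prime `𝔭`, the localization `M_𝔭` (at the
multiplicative set of homogeneous elements outside `𝔭`) vanishes iff the
localizations of `M⁰` and `M¹` as modules over the commutative even part `R⁰`
vanish at the induced prime `𝔭 ∩ R⁰`. Vanishing of a localization is expressed
by the standard criterion: every element is killed by some element of the
multiplicative set. -/
theorem super_localization_vanishing_iff_even_components
    (R : Type*) [Ring R] (𝒜 : ZMod 2 → AddSubgroup R) [GradedRing 𝒜]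
    (hsc : ∀ (i j : ZMod 2), ∀ a ∈ 𝒜 i, ∀ b ∈ 𝒜 j,
      a * b = ((-1 : ℤ) ^ (i.val * j.val)) • (b * a))
    (M : Type*) [AddCommGroup M] [Module R M]
    (ℳ : ZMod 2 → AddSubgroup M) [DirectSum.Decomposition ℳ]
    (hcompat : ∀ (i j : ZMod 2), ∀ r ∈ 𝒜 i, ∀ m ∈ ℳ j, r • m ∈ ℳ (i + j))
    (𝔭 : SuperHomogeneousPrime R 𝒜) :
    (∀ m : M, ∃ s : R, (∃ i, s ∈ 𝒜 i) ∧ s ∉ 𝔭.carrier ∧ s • m = 0) ↔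
      ((∀ m ∈ ℳ 0, ∃ s : R, s ∈ 𝒜 0 ∧ s ∉ 𝔭.carrier ∧ s • m = 0) ∧
       (∀ m ∈ ℳ 1, ∃ s : R, s ∈ 𝒜 0 ∧ s ∉ 𝔭.carrier ∧ s • m = 0)) := by
 classical
  constructor
  · intro h
    have key : ∀ m : M, ∃ s : R, s ∈ 𝒜 0 ∧ s ∉ 𝔭.carrier ∧ s • m = 0 := by
      intro m
      obtain ⟨s, ⟨i, hi⟩, hsp, hsm⟩ := h m
      refine ⟨s * s, ?_, ?_, ?_⟩
      · have hii : i + i = 0 := by fin_cases i <;> rfl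
        have := SetLike.mul_mem_graded hi hi
        rwa [hii] at this
      · intro hmem
        rcases 𝔭.prime' s s ⟨i, hi⟩ ⟨i, hi⟩ hmem with h' | h' <;> exact hsp h'
      · rw [mul_smul, hsm, smul_zero]
    exact ⟨fun m _ => key m, fun m _ => key m⟩
  · rintro ⟨h0, h1⟩ m
    set m0 : M := (DirectSum.decompose ℳ m 0 : M) with hm0
    set m1 : M := (DirectSum.decompose ℳ m 1 : M) with hm1
    obtain ⟨s0, hs0, hs0p, hs0m⟩ := h0 m0 (SetLike.coe_mem _)
    obtain ⟨s1, hs1, hs1p, hs1m⟩ := h1 m1 (SetLike.coe_mem _)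
    have hcomm : s0 * s1 = s1 * s0 := by
      have := hsc 0 0 s0 hs0 s1 hs1
      simpa using this
    have hm : m = m0 + m1 := by
      have hsup := DirectSum.sum_support_decompose ℳ m
      have huniv : ∑ i : ZMod 2, (DirectSum.decompose ℳ m i : M) = m :=
        (Finset.sum_subset (Finset.subset_univ _) (fun i _ hi => by
          rw [DFinsupp.notMem_support_iff.mp hi]; rfl)).symm.trans hsup
      have hU : (Finset.univ : Finset (ZMod 2)) = {0, 1} := by decide
      rw [← huniv, hU, Finset.sum_insert (by decide), Finset.sum_singleton]
    have e0 : (s0 * s1) • m0 = 0 := by rw [hcomm, mul_smul, hs0m, smul_zero]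
    have e1 : (s0 * s1) • m1 = 0 := by rw [mul_smul, hs1m, smul_zero]
    refine ⟨s0 * s1, ⟨0, by simpa using SetLike.mul_mem_graded hs0 hs1⟩, ?_, ?_⟩
    · intro hmem
      rcases 𝔭.prime' s0 s1 ⟨0, hs0⟩ ⟨0, hs1⟩ hmem with h' | h'
      · exact hs0p h'
      · exact hs1p h'
    · rw [hm, smul_add, e0, e1, add_zero]
end
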